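/- Let X be a directed space. The binary union operation ∪ on LX = {↓F : F nonempty finite ⊆ X}, given by ↓F₁ ∪ ↓F₂ = ↓(F₁ ∪ F₂), is well-defined, idempotent, associative, commutative, inflationary (↓F₁ ∪ ↓F₂ ⊇ ↓F₁), and separately continuous with respect to the topology O_{⇒L}(LX); hence (LX, ∪) is a directed inflationary semilattice. -/

import Mathlib

variable {X : Type*}

/-- The specialization order: `x ⊑ y` iff `x ∈ closure {y}`. -/
def sle [TopologicalSpace X] (x y : X) : Prop := x ∈ closure {y}

/-- A directed subset with respect to the specialization order. -/
def IsDirSet [TopologicalSpace X] (D : Set X) : Prop :=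
  D.Nonempty ∧ ∀ a ∈ D, ∀ b ∈ D, ∃ c ∈ D, sle a c ∧ sle b c

/-- `DConv D x`: the directed set `D`, viewed as a net (indexed by itself with
the specialization order), converges to `x`. -/
def DConv [TopologicalSpace X] (D : Set X) (x : X) : Prop :=
  IsDirSet D ∧ ∀ U : Set X, IsOpen U → x ∈ U → ∃ d ∈ D, ∀ e ∈ D, sle d e → e ∈ U

/-- Directed open set. -/
def DOpen [TopologicalSpace X] (U : Set X) : Prop :=
  ∀ D : Set X, ∀ x : X, DConv D x → x ∈ U → (D ∩ U).Nonempty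

/-- A directed space: every directed open set is open. -/
def IsDirectedSpace (X : Type*) [TopologicalSpace X] : Prop :=
  ∀ U : Set X, DOpen U → IsOpen U

/-- Down-closure with respect to the specialization order. -/
def dcl [TopologicalSpace X] (F : Set X) : Set X := {x | ∃ a ∈ F, sle x a}

/-- Membership in `LX`: down-closures of nonempty finite sets. -/
def InLX [TopologicalSpace X] (A : Set X) : Prop :=
  ∃ F : Finset X, F.Nonempty ∧ A = dcl (F : Set X)

/-- A directed (under inclusion) family of elements of `LX`. -/
def LDir [TopologicalSpace X] (𝒟 : Set (Set X)) : Prop :=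
  (∀ B ∈ 𝒟, InLX B) ∧ 𝒟.Nonempty ∧ ∀ A ∈ 𝒟, ∀ B ∈ 𝒟, ∃ C ∈ 𝒟, A ⊆ C ∧ B ⊆ C

/-- The convergence `𝒟 ⇒_L ↓F`. -/
def LConv [TopologicalSpace X] (𝒟 : Set (Set X)) (A : Set X) : Prop :=
  LDir 𝒟 ∧ ∃ F : Finset X, F.Nonempty ∧ A = dcl (F : Set X) ∧
    ∀ a ∈ F, ∃ D : Set X, D ⊆ ⋃₀ 𝒟 ∧ DConv D a

/-- `⇒_L`-convergence open subsets of `LX`. -/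
def LOpen [TopologicalSpace X] (𝒰 : Set (Set X)) : Prop :=
  (∀ A ∈ 𝒰, InLX A) ∧ ∀ 𝒟 A, LConv 𝒟 A → A ∈ 𝒰 → (𝒟 ∩ 𝒰).Nonempty

section Specialization

variable [TopologicalSpace X]

theorem sle_refl (x : X) : sle x x := subset_closure rfl

theorem mem_dcl_of_mem {F : Set X} {a : X} (ha : a ∈ F) : a ∈ dcl F := ⟨a, ha, sle_refl a⟩

theorem dcl_union (F G : Set X) : dcl (F ∪ G) = dcl F ∪ dcl G := by
  ext x
  simp only [dcl, Set.mem_union, Set.mem_ofPred_eq, or_and_right, exists_or]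

theorem dconv_singleton (a : X) : DConv {a} a := by
  refine ⟨⟨Set.singleton_nonempty a, ?_⟩, fun U _ haU => ⟨a, rfl, ?_⟩⟩
  · rintro _ rfl _ rfl
    exact ⟨_, rfl, sle_refl _, sle_refl _⟩
  · rintro _ rfl _
    exact haU

theorem InLX.union {A B : Set X} (hA : InLX A) (hB : InLX B) : InLX (A ∪ B) := by
  classical
  obtain ⟨F, hF, rfl⟩ := hA
  obtain ⟨G, hG, rfl⟩ := hB
  exact ⟨F ∪ G, hF.mono Finset.subset_union_left, by rw [Finset.coe_union, dcl_union]⟩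

theorem LDir.image_union_right {𝒟 : Set (Set X)} {B : Set X} (h𝒟 : LDir 𝒟) (hB : InLX B) :
    LDir ((· ∪ B) '' 𝒟) := by
  obtain ⟨hmem, hne, hdir⟩ := h𝒟
  refine ⟨?_, hne.image _, ?_⟩
  · rintro _ ⟨C, hC, rfl⟩
    exact (hmem C hC).union hB
  · rintro _ ⟨C, hC, rfl⟩ _ ⟨C', hC', rfl⟩
    obtain ⟨E, hE, hCE, hC'E⟩ := hdir C hC C' hC'
    exact ⟨E ∪ B, ⟨E, hE, rfl⟩, Set.union_subset_union_left B hCE,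
      Set.union_subset_union_left B hC'E⟩

theorem LConv.union_right {𝒟 : Set (Set X)} {A B : Set X} (h : LConv 𝒟 A) (hB : InLX B) :
    LConv ((· ∪ B) '' 𝒟) (A ∪ B) := by
  classical
  obtain ⟨h𝒟, F, hF, rfl, hconv⟩ := h
  obtain ⟨G, hG, rfl⟩ := hB
  have hsub : ⋃₀ 𝒟 ⊆ ⋃₀ ((· ∪ dcl (G : Set X)) '' 𝒟) := by
    rintro x ⟨C, hC, hxC⟩
    exact ⟨C ∪ dcl G, ⟨C, hC, rfl⟩, Or.inl hxC⟩
  -- A point of `G` is the limit of the constant directed set on it, which lies in every `C ∪ ↓G`.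
  have hG_sub : dcl (G : Set X) ⊆ ⋃₀ ((· ∪ dcl (G : Set X)) '' 𝒟) := by
    obtain ⟨C, hC⟩ := h𝒟.2.1
    exact fun x hx => ⟨C ∪ dcl G, ⟨C, hC, rfl⟩, Or.inr hx⟩
  refine ⟨h𝒟.image_union_right ⟨G, hG, rfl⟩, F ∪ G, hF.mono Finset.subset_union_left,
    by rw [Finset.coe_union, dcl_union], fun a ha => ?_⟩
  rcases Finset.mem_union.1 ha with haF | haG
  · obtain ⟨D, hD, hDa⟩ := hconv a haF
    exact ⟨D, hD.trans hsub, hDa⟩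
  · exact ⟨{a}, Set.singleton_subset_iff.2 (hG_sub (mem_dcl_of_mem haG)), dconv_singleton a⟩

end Specialization

theorem stmt_11_general [TopologicalSpace X] :
    (∀ F G : Finset X, F.Nonempty → G.Nonempty →
        dcl (F : Set X) ∪ dcl (G : Set X) = dcl ((F : Set X) ∪ (G : Set X))) ∧
    (∀ A B : Set X, InLX A → InLX B → InLX (A ∪ B)) ∧
    (∀ A : Set X, A ∪ A = A) ∧
    (∀ A B C : Set X, (A ∪ B) ∪ C = A ∪ (B ∪ C)) ∧
    (∀ A B : Set X, A ∪ B = B ∪ A) ∧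
    (∀ A B : Set X, A ⊆ A ∪ B) ∧
    (∀ B : Set X, InLX B → ∀ 𝒟 A, LConv 𝒟 A → LConv ((· ∪ B) '' 𝒟) (A ∪ B)) :=
  ⟨fun _ _ _ _ => (dcl_union _ _).symm, fun _ _ hA hB => hA.union hB, Set.union_self,
    Set.union_assoc, Set.union_comm, fun _ _ => Set.subset_union_left,
    fun _ hB _ _ h => h.union_right hB⟩

/-- binary union on `LX` is well defined, idempotent, associative,
commutative, inflationary and separately continuous, so `(LX, ∪)` is a directed
inflationary semilattice. -/
theorem stmt_11 [TopologicalSpace X] [T0Space X] (hX : IsDirectedSpace X) :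
    (∀ F G : Finset X, F.Nonempty → G.Nonempty →
        dcl (F : Set X) ∪ dcl (G : Set X) = dcl ((F : Set X) ∪ (G : Set X))) ∧
    (∀ A B : Set X, InLX A → InLX B → InLX (A ∪ B)) ∧
    (∀ A : Set X, A ∪ A = A) ∧
    (∀ A B C : Set X, (A ∪ B) ∪ C = A ∪ (B ∪ C)) ∧
    (∀ A B : Set X, A ∪ B = B ∪ A) ∧
    (∀ A B : Set X, A ⊆ A ∪ B) ∧
    (∀ B : Set X, InLX B → ∀ 𝒟 A, LConv 𝒟 A → LConv ((· ∪ B) '' 𝒟) (A ∪ B)) :=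
  stmt_11_general
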